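/- Let V = ℝ^{2p+k} with standard basis e_1,…,e_{2p+k}, and let B be the bilinear form with B(e_{2i−1}, e_{2i}) = B(e_{2i}, e_{2i−1}) = 1 for 1 ≤ i ≤ p, B(e_j, e_j) = 1 for 2p < j ≤ 2p+k, and all other pairings of basis vectors zero. Fix real numbers x_1,…,x_p and define weights w(e_{2i−1}) = −x_i, w(e_{2i}) = x_i for 1 ≤ i ≤ p and w(e_j) = 0 for j > 2p; let X be the diagonal endomorphism X e_a = w(e_a) e_a (which lies in the Lie algebra of O(B)). Let μ be an alternating bilinear map on V with structure constants C^c_{ab} (i.e., μ(e_a, e_b) = Σ_c C^c_{ab} e_c), and suppose that for all indices a, b, c with C^c_{ab} ≠ 0 one has w(e_a) + w(e_b) − w(e_c) < 0. Then e^{tX}·μ → 0 as t → ∞, where (e^{tX}·μ)(x,y) = e^{−tX}(μ(e^{tX}x, e^{tX}y)); in particular, μ is in the null cone of the O(B)-action. -/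
import Mathlib


/-- The isometry group `O(B)` of a bilinear form `B`. -/
def IsometryGrp {V : Type*} [AddCommGroup V] [Module ℝ V]
    (B : LinearMap.BilinForm ℝ V) : Set (V ≃ₗ[ℝ] V) :=
  {A | ∀ x y, B (A x) (A y) = B x y}

/-- `μ` is in the null cone of the `O(B)`-action: `0` lies in the closure of the orbit
`O(B)·μ`, `(A·μ)(x,y) = A⁻¹(μ(Ax,Ay))`, in the topology of pointwise convergence. -/
def InNullCone {V : Type*} [AddCommGroup V] [Module ℝ V] [TopologicalSpace V]
    (B : LinearMap.BilinForm ℝ V) (μ : V → V → V) : Prop :=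
  (0 : V → V → V) ∈
    closure {f : V → V → V | ∃ A ∈ IsometryGrp B, f = fun x y => A.symm (μ (A x) (A y))}

/-- Gram matrix (0-indexed) of the form with `B(e_{2i-1}, e_{2i}) = B(e_{2i}, e_{2i-1}) = 1`
for `1 ≤ i ≤ p` (i.e. the 0-indexed pairs `(2i, 2i+1)`, `i < p`) and `B(e_j, e_j) = 1` for
`2p < j ≤ 2p + k`, all other pairings of basis vectors zero. -/
def nullGram (p k : ℕ) : Matrix (Fin (2 * p + k)) (Fin (2 * p + k)) ℝ :=
  Matrix.of fun a b =>
    if a.val < 2 * p ∧ b.val < 2 * p ∧ a.val / 2 = b.val / 2 ∧ a ≠ b then 1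
    else if 2 * p ≤ a.val ∧ a = b then 1 else 0

/-- The boost weights: `w(e_{2i-1}) = -x_i`, `w(e_{2i}) = x_i` for `1 ≤ i ≤ p` (0-indexed:
`w(e_{2j}) = -x_j`, `w(e_{2j+1}) = x_j` for `j < p`) and `w(e_j) = 0` for `j > 2p`. -/
def bw (p k : ℕ) (x : Fin p → ℝ) (a : Fin (2 * p + k)) : ℝ :=
  if h : a.val < 2 * p then
    (if a.val % 2 = 0 then -x ⟨a.val / 2, by omega⟩ else x ⟨a.val / 2, by omega⟩)
  else 0

/-- The one-parameter group `e^{tX}` generated by the diagonal endomorphism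
`X e_a = w(e_a) e_a` (which lies in the Lie algebra of `O(B)`). -/
noncomputable def flow (p k : ℕ) (x : Fin p → ℝ) (t : ℝ) (v : Fin (2 * p + k) → ℝ) : Fin (2 * p + k) → ℝ :=
  fun a => Real.exp (t * bw p k x a) * v a

lemma flow_flow (p k : ℕ) (x : Fin p → ℝ) (s t : ℝ) (v : Fin (2 * p + k) → ℝ) :
    flow p k x s (flow p k x t v) = flow p k x (s + t) v := by
  funext a
  simp only [flow, ← mul_assoc, ← Real.exp_add]
  ring_nf

noncomputable def flowEquiv (p k : ℕ) (x : Fin p → ℝ) (t : ℝ) :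
    (Fin (2 * p + k) → ℝ) ≃ₗ[ℝ] (Fin (2 * p + k) → ℝ) where
  toFun := flow p k x t
  invFun := flow p k x (-t)
  map_add' u v := by funext a; simp [flow]; ring
  map_smul' c v := by funext a; simp [flow]; ring
  left_inv v := by
    show flow p k x (-t) (flow p k x t v) = v
    rw [flow_flow]; funext a; simp [flow]
  right_inv v := by
    show flow p k x t (flow p k x (-t) v) = v
    rw [flow_flow]; funext a; simp [flow]

lemma bw_pair (p k : ℕ) (x : Fin p → ℝ) (a b : Fin (2 * p + k))
    (h : nullGram p k a b ≠ 0) : bw p k x a + bw p k x b = 0 := by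
  unfold nullGram at h
  simp only [Matrix.of_apply] at h
  split_ifs at h with h1 h2
  · obtain ⟨ha, hb, hdiv, hne⟩ := h1
    have hv : a.val ≠ b.val := fun e => hne (Fin.ext e)
    have hm : a.val % 2 ≠ b.val % 2 := by omega
    unfold bw
    rw [dif_pos ha, dif_pos hb]
    have hfin : (⟨a.val / 2, by omega⟩ : Fin p) = ⟨b.val / 2, by omega⟩ := by
      simp [Fin.mk.injEq, hdiv]
    rcases Nat.mod_two_eq_zero_or_one a.val with h0 | h0
    · have h1' : b.val % 2 ≠ 0 := by omega
      rw [if_pos h0, if_neg h1', hfin]; ring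
    · have h1' : a.val % 2 ≠ 0 := by omega
      have h2' : b.val % 2 = 0 := by omega
      rw [if_neg h1', if_pos h2', hfin]; ring
  · obtain ⟨hle, heq⟩ := h2
    subst heq
    unfold bw
    rw [dif_neg (by omega)]
    ring
  · exact absurd rfl h

lemma single_eq (n : ℕ) (i : Fin n) :
    (fun j => if i = j then (1:ℝ) else 0) = Pi.single i 1 := by
  funext j
  simp [Pi.single_apply, eq_comm]


/-- If every nonzero structure constant `C^c_{ab}` of an alternating bilinear map `μ`
satisfies `w(e_a) + w(e_b) - w(e_c) < 0`, then `e^{tX}·μ → 0` as `t → ∞`;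
in particular `μ` is in the null cone of the `O(B)`-action. -/
theorem negative_boost_weights_in_null_cone (p k : ℕ) (x : Fin p → ℝ)
    (μ : (Fin (2 * p + k) → ℝ) →ₗ[ℝ] (Fin (2 * p + k) → ℝ) →ₗ[ℝ] (Fin (2 * p + k) → ℝ))
    (halt : ∀ v, μ v v = 0)
    (hC : ∀ a b c : Fin (2 * p + k), μ (Pi.single a 1) (Pi.single b 1) c ≠ 0 →
      bw p k x a + bw p k x b - bw p k x c < 0) :
    Filter.Tendsto
      (fun t : ℝ => fun u v : Fin (2 * p + k) → ℝ =>
        flow p k x (-t) (μ (flow p k x t u) (flow p k x t v)))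
      Filter.atTop (nhds 0) ∧
    InNullCone (Matrix.toLinearMap₂' ℝ (nullGram p k)) (fun u v => μ u v) := by
  have key : Filter.Tendsto
      (fun t : ℝ => fun u v : Fin (2 * p + k) → ℝ =>
        flow p k x (-t) (μ (flow p k x t u) (flow p k x t v)))
      Filter.atTop (nhds 0) := by
    rw [tendsto_pi_nhds]
    intro u
    rw [tendsto_pi_nhds]
    intro v
    rw [tendsto_pi_nhds]
    intro c
    simp only [Pi.zero_apply]
    have pi_single_sum : ∀ w : Fin (2 * p + k) → ℝ, w = ∑ i, w i • (Pi.single i 1 : Fin (2 * p + k) → ℝ) := by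
      intro w
      funext j
      rw [Finset.sum_apply]
      simp [Pi.single_apply]
    have expand : ∀ t : ℝ,
        flow p k x (-t) (μ (flow p k x t u) (flow p k x t v)) c =
        ∑ a : Fin (2 * p + k), ∑ b : Fin (2 * p + k),
          (u a * v b * μ (Pi.single a 1) (Pi.single b 1) c) *
            Real.exp (t * (bw p k x a + bw p k x b - bw p k x c)) := by
      intro t
      show Real.exp (-t * bw p k x c) * (μ (flow p k x t u) (flow p k x t v) c) = _
      conv_lhs => rw [pi_single_sum (flow p k x t u), pi_single_sum (flow p k x t v)]
      simp only [map_sum, map_smul, LinearMap.sum_apply, LinearMap.smul_apply,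
        Finset.sum_apply, Pi.smul_apply, smul_eq_mul, Finset.mul_sum]
      rw [Finset.sum_comm]
      refine Finset.sum_congr rfl fun a _ => Finset.sum_congr rfl fun b _ => ?_
      show Real.exp (-t * bw p k x c) *
          (flow p k x t v b * (flow p k x t u a *
            μ (Pi.single a 1) (Pi.single b 1) c)) = _
      show Real.exp (-t * bw p k x c) *
          (Real.exp (t * bw p k x b) * v b * (Real.exp (t * bw p k x a) * u a *
            μ (Pi.single a 1) (Pi.single b 1) c)) = _
      rw [show t * (bw p k x a + bw p k x b - bw p k x c)
          = t * bw p k x a + (t * bw p k x b + -t * bw p k x c) by ring,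
        Real.exp_add, Real.exp_add]
      ring
    have main : Filter.Tendsto
        (fun t : ℝ => ∑ a : Fin (2 * p + k), ∑ b : Fin (2 * p + k),
          (u a * v b * μ (Pi.single a 1) (Pi.single b 1) c) *
            Real.exp (t * (bw p k x a + bw p k x b - bw p k x c)))
        Filter.atTop (nhds 0) := by
      rw [show (0:ℝ) = ∑ _a : Fin (2 * p + k), ∑ _b : Fin (2 * p + k), (0:ℝ) by simp]
      refine tendsto_finset_sum _ fun a _ => tendsto_finset_sum _ fun b _ => ?_
      by_cases hc : μ (Pi.single a 1) (Pi.single b 1) c = 0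
      · simp [hc]
      · have hs := hC a b c hc
        have h1 : Filter.Tendsto
            (fun t : ℝ => Real.exp (t * (bw p k x a + bw p k x b - bw p k x c)))
            Filter.atTop (nhds 0) := by
          refine Real.tendsto_exp_atBot.comp ?_
          exact Filter.Tendsto.atTop_mul_const_of_neg hs Filter.tendsto_id
        have := h1.const_mul (u a * v b * μ (Pi.single a 1) (Pi.single b 1) c)
        simpa using this
    exact main.congr fun t => (expand t).symm
  refine ⟨key, ?_⟩
  have hiso : ∀ t : ℝ, (flowEquiv p k x t) ∈
      IsometryGrp (Matrix.toLinearMap₂' ℝ (nullGram p k)) := by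
    intro t u v
    show (Matrix.toLinearMap₂' ℝ (nullGram p k)) (flow p k x t u) (flow p k x t v) = _
    rw [Matrix.toLinearMap₂'_apply, Matrix.toLinearMap₂'_apply]
    refine Finset.sum_congr rfl fun a _ => Finset.sum_congr rfl fun b _ => ?_
    by_cases h : nullGram p k a b = 0
    · simp [h]
    · have := bw_pair p k x a b h
      simp only [flow, smul_eq_mul]
      rw [show Real.exp (t * bw p k x a) * u a * (Real.exp (t * bw p k x b) * v b * nullGram p k a b)
        = (Real.exp (t * bw p k x a) * Real.exp (t * bw p k x b)) * (u a * (v b * nullGram p k a b)) by ring,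
        ← Real.exp_add, show t * bw p k x a + t * bw p k x b = t * (bw p k x a + bw p k x b) by ring,
        this, mul_zero, Real.exp_zero, one_mul]
  refine mem_closure_of_tendsto key (Filter.Eventually.of_forall fun t => ?_)
  exact ⟨flowEquiv p k x t, hiso t, rfl⟩
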